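/- Let f : ℝⁿ → ℝ ∪ {+∞} be lower semicontinuous with dom f unbounded in direction u ∈ 𝕊 (i.e. u ∈ (dom f)^∞). Then ∂f(∞;u) = {ξ : (ξ,−1) ∈ 𝒩_u} and ∂^∞f(∞;u) = {ξ : (ξ,0) ∈ 𝒩_u}, where 𝒩_u is the set of all limits of sequences (ξ_k,ρ_k) with (ξ_k,ρ_k) ∈ N((x_k, f(x_k)); epi f) for some sequence x_k with ‖x_k‖ → ∞ and x_k/‖x_k‖ → u. -/

import Mathlib

open Filter Topology Set
open scoped RealInnerProductSpace Pointwise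

noncomputable section

/-- `ℝⁿ` with the Euclidean structure. -/
abbrev Eu (n : ℕ) := EuclideanSpace ℝ (Fin n)

/-- `x_k →ᵘ ∞` : `‖x_k‖ → ∞` and `x_k / ‖x_k‖ → u`. -/
def TendstoDirInfty {n : ℕ} (x : ℕ → Eu n) (u : Eu n) : Prop :=
  Tendsto (fun k => ‖x k‖) atTop atTop ∧
  Tendsto (fun k => ‖x k‖⁻¹ • x k) atTop (𝓝 u)

/-- The asymptotic cone of `D`: all `u` such that `x_k / t_k → u` for some
`t_k → +∞` and `x_k ∈ D`. -/
def asymptoticConeEu {n : ℕ} (D : Set (Eu n)) : Set (Eu n) :=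
  {u | ∃ (t : ℕ → ℝ) (x : ℕ → Eu n), Tendsto t atTop atTop ∧ (∀ k, x k ∈ D) ∧
      Tendsto (fun k => (t k)⁻¹ • x k) atTop (𝓝 u)}

/-- The Euclidean norm of `p ∈ ℝⁿ × ℝ`. -/
def pnorm {n : ℕ} (p : Eu n × ℝ) : ℝ := Real.sqrt (‖p.1‖ ^ 2 + p.2 ^ 2)

/-- The Euclidean inner product on `ℝⁿ × ℝ`. -/
def pinner {n : ℕ} (v p : Eu n × ℝ) : ℝ := ⟪v.1, p.1⟫ + v.2 * p.2

/-- The Fréchet (regular) normal cone to `S ⊆ ℝⁿ × ℝ` at `q` (empty when `q ∉ S`). -/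
def frechetNCP {n : ℕ} (S : Set (Eu n × ℝ)) (q : Eu n × ℝ) : Set (Eu n × ℝ) :=
  {w | q ∈ S ∧ ∀ ε > 0, ∃ δ > 0, ∀ p ∈ S, pnorm (p - q) < δ →
        pinner w (p - q) ≤ ε * pnorm (p - q)}

/-- Epigraph of `f : ℝⁿ → ℝ ∪ {+∞}`. -/
def epigraph {n : ℕ} (f : Eu n → EReal) : Set (Eu n × ℝ) := {p | f p.1 ≤ (p.2 : EReal)}

/-- The limiting subdifferential of `f` in direction `u` at infinity:
`ξ` with `(ξ_k, -s_k) ∈ N̂((x_k, r_k); epi f)`, `r_k ≥ f(x_k)`, `x_k →ᵘ ∞`,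
`(ξ_k, -s_k) → (ξ, -1)`. -/
def dirSubdiffInfty {n : ℕ} (f : Eu n → EReal) (u : Eu n) : Set (Eu n) :=
  {ξ | ∃ (x : ℕ → Eu n) (r : ℕ → ℝ) (w : ℕ → Eu n × ℝ),
      TendstoDirInfty x u ∧ (∀ k, f (x k) ≤ ((r k : ℝ) : EReal)) ∧
      (∀ k, w k ∈ frechetNCP (epigraph f) (x k, r k)) ∧
      Tendsto w atTop (𝓝 (ξ, (-1 : ℝ)))}

/-- The singular subdifferential of `f` in direction `u` at infinity. -/
def dirSingSubdiffInfty {n : ℕ} (f : Eu n → EReal) (u : Eu n) : Set (Eu n) :=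
  {ξ | ∃ (x : ℕ → Eu n) (r : ℕ → ℝ) (w : ℕ → Eu n × ℝ),
      TendstoDirInfty x u ∧ (∀ k, f (x k) ≤ ((r k : ℝ) : EReal)) ∧
      (∀ k, w k ∈ frechetNCP (epigraph f) (x k, r k)) ∧
      Tendsto w atTop (𝓝 (ξ, (0 : ℝ)))}

/-- The limiting (Mordukhovich) normal cone to `S ⊆ ℝⁿ × ℝ` at `q`: all limits of
Fréchet normals at points of `S` converging to `q`. -/
def limitingNCP {n : ℕ} (S : Set (Eu n × ℝ)) (q : Eu n × ℝ) : Set (Eu n × ℝ) :=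
  {w | ∃ (s v : ℕ → Eu n × ℝ), (∀ k, s k ∈ S) ∧ Tendsto s atTop (𝓝 q) ∧
      (∀ k, v k ∈ frechetNCP S (s k)) ∧ Tendsto v atTop (𝓝 w)}

/-- `𝒩_u`: the set of all limits of sequences `(ξ_k, ρ_k) ∈ N((x_k, f(x_k)); epi f)`
along sequences `x_k →ᵘ ∞`. -/
def NuSet {n : ℕ} (f : Eu n → EReal) (u : Eu n) : Set (Eu n × ℝ) :=
  {w | ∃ (x : ℕ → Eu n) (v : ℕ → Eu n × ℝ), TendstoDirInfty x u ∧
      (∀ k, v k ∈ limitingNCP (epigraph f) (x k, (f (x k)).toReal)) ∧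
      Tendsto v atTop (𝓝 w)}

/-! ### Auxiliary lemmas -/

/-- A Fréchet normal at `(x, r)` with `f x < r` has vanishing second coordinate. -/
lemma frechet_vert_zero {n : ℕ} {f : Eu n → EReal} (hfbot : ∀ x, f x ≠ ⊥)
    {x : Eu n} {r : ℝ} {w : Eu n × ℝ}
    (hw : w ∈ frechetNCP (epigraph f) (x, r)) (hlt : f x < (r : EReal)) :
    w.2 = 0 := by
  obtain ⟨hq, hcond⟩ := hw
  have hnt : f x ≠ ⊤ := hlt.ne_top
  set a : ℝ := (f x).toReal with ha_def
  have ha : f x = (a : EReal) := (EReal.coe_toReal hnt (hfbot x)).symm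
  have har : a < r := by
    rw [ha] at hlt; exact_mod_cast hlt
  have key : ∀ ε > (0:ℝ), |w.2| ≤ ε := by
    intro ε hε
    obtain ⟨δ, hδ, H⟩ := hcond ε hε
    set t : ℝ := min (δ / 2) ((r - a) / 2) with ht_def
    have ht : 0 < t := lt_min (by linarith) (by linarith)
    have htδ : t < δ := lt_of_le_of_lt (min_le_left _ _) (by linarith)
    have htr : a ≤ r - t := by
      have := min_le_right (δ / 2) ((r - a) / 2)
      simp only [← ht_def] at this
      linarith
    have hsub : ∀ s : ℝ, ((x, s) : Eu n × ℝ) - (x, r) = (0, s - r) := by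
      intro s; ext <;> simp
    have hpn : ∀ s : ℝ, pnorm (((x, s) : Eu n × ℝ) - (x, r)) = |s - r| := by
      intro s
      rw [hsub]
      simp [pnorm, Real.sqrt_sq_eq_abs]
    have hpi : ∀ s : ℝ, pinner w (((x, s) : Eu n × ℝ) - (x, r)) = w.2 * (s - r) := by
      intro s
      rw [hsub]
      simp [pinner]
    -- point (x, r + t)
    have hmemP : ((x, r + t) : Eu n × ℝ) ∈ epigraph f := by
      show f x ≤ ((r + t : ℝ) : EReal)
      exact le_trans hq (EReal.coe_le_coe_iff.mpr (by linarith))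
    have hP := H _ hmemP (by rw [hpn]; rw [abs_of_pos (by linarith)] ; linarith)
    rw [hpi, hpn] at hP
    -- point (x, r - t)
    have hmemM : ((x, r - t) : Eu n × ℝ) ∈ epigraph f := by
      show f x ≤ ((r - t : ℝ) : EReal)
      rw [ha]; exact_mod_cast htr
    have hM := H _ hmemM (by rw [hpn]; rw [abs_of_neg (by linarith)]; linarith)
    rw [hpi, hpn] at hM
    have eP : w.2 * t ≤ ε * t := by
      have : |r + t - r| = t := by rw [abs_of_pos (by linarith)]; ring_nf
      rw [this] at hP; have : r + t - r = t := by ring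
      rw [this] at hP; exact hP
    have eM : -(w.2 * t) ≤ ε * t := by
      have h1 : |r - t - r| = t := by rw [abs_of_neg (by linarith)]; ring
      rw [h1] at hM
      have h2 : r - t - r = -t := by ring
      rw [h2] at hM
      linarith [hM]
    have hw2 : w.2 ≤ ε := le_of_mul_le_mul_right eP ht
    have hw2' : -w.2 ≤ ε := le_of_mul_le_mul_right (by linarith) ht
    exact abs_le.mpr ⟨by linarith, hw2⟩
  by_contra h
  have hpos : 0 < |w.2| := abs_pos.mpr h
  have := key (|w.2| / 2) (by linarith)
  linarith

/-- A Fréchet normal to the epigraph at `(x, r)` is a Fréchet normal at `(x, f x)`. -/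
lemma frechet_toReal {n : ℕ} {f : Eu n → EReal} (hfbot : ∀ x, f x ≠ ⊥)
    {x : Eu n} {r : ℝ} {w : Eu n × ℝ}
    (hw : w ∈ frechetNCP (epigraph f) (x, r)) :
    w ∈ frechetNCP (epigraph f) (x, (f x).toReal) := by
  have hle : f x ≤ (r : EReal) := hw.1
  have hnt : f x ≠ ⊤ := ne_top_of_le_ne_top (EReal.coe_ne_top r) hle
  set a : ℝ := (f x).toReal with ha_def
  have ha : f x = (a : EReal) := (EReal.coe_toReal hnt (hfbot x)).symm
  have har : a ≤ r := by rw [ha] at hle; exact_mod_cast hle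
  rcases eq_or_lt_of_le hle with heq | hlt
  · have : a = r := by rw [ha] at heq; exact_mod_cast heq
    rw [← ha_def] at *
    rw [this]; exact hw
  · have hw2 : w.2 = 0 := frechet_vert_zero hfbot hw hlt
    refine ⟨le_of_eq ha, ?_⟩
    intro ε hε
    obtain ⟨δ, hδ, H⟩ := hw.2 ε hε
    refine ⟨δ, hδ, ?_⟩
    intro p hp hdist
    have hp' : ((p.1, p.2 + (r - a)) : Eu n × ℝ) ∈ epigraph f := by
      show f p.1 ≤ ((p.2 + (r - a) : ℝ) : EReal)
      exact le_trans hp (EReal.coe_le_coe_iff.mpr (by linarith))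
    have hkey : ((p.1, p.2 + (r - a)) : Eu n × ℝ) - (x, r) = p - (x, a) := by
      ext
      · simp
      · simp; ring
    have := H _ hp' (by rw [hkey]; exact hdist)
    rwa [hkey] at this

/-- Normalization is stable under bounded perturbation (quantitative form). -/
lemma normalize_dist {n : ℕ} (x y : Eu n) (hx : x ≠ 0) :
    dist (‖y‖⁻¹ • y) (‖x‖⁻¹ • x) ≤ 2 * ‖y - x‖ / ‖x‖ := by
  rcases eq_or_ne y 0 with rfl | hy
  · have hxn : 0 < ‖x‖ := norm_pos_iff.mpr hx
    simp [dist_eq_norm, norm_smul, abs_of_nonneg (le_of_lt (inv_pos.mpr hxn)),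
      inv_mul_cancel₀ (ne_of_gt hxn)]
    rw [mul_div_assoc, div_self hxn.ne']
    norm_num
  · have hxn : 0 < ‖x‖ := norm_pos_iff.mpr hx
    have hyn : 0 < ‖y‖ := norm_pos_iff.mpr hy
    rw [dist_eq_norm]
    have key : ‖y‖⁻¹ • y - ‖x‖⁻¹ • x = ‖x‖⁻¹ • (y - x) + (‖y‖⁻¹ - ‖x‖⁻¹) • y := by
      rw [smul_sub, sub_smul]; abel
    rw [key]
    have h1 : ‖‖x‖⁻¹ • (y - x)‖ = ‖y - x‖ / ‖x‖ := by
      rw [norm_smul, Real.norm_eq_abs, abs_of_pos (inv_pos.mpr hxn)]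
      rw [inv_mul_eq_div]
    have h2 : ‖(‖y‖⁻¹ - ‖x‖⁻¹) • y‖ ≤ ‖y - x‖ / ‖x‖ := by
      rw [norm_smul, Real.norm_eq_abs]
      have hb : |‖y‖⁻¹ - ‖x‖⁻¹| = |‖x‖ - ‖y‖| / (‖x‖ * ‖y‖) := by
        rw [show ‖y‖⁻¹ - ‖x‖⁻¹ = (‖x‖ - ‖y‖) / (‖x‖ * ‖y‖) by field_simp, abs_div,
          abs_of_pos (mul_pos hxn hyn)]
      have e2 : |‖y‖⁻¹ - ‖x‖⁻¹| * ‖y‖ = |‖x‖ - ‖y‖| / ‖x‖ := by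
        rw [hb]; field_simp
      rw [e2]
      gcongr
      calc |‖x‖ - ‖y‖| = |‖y‖ - ‖x‖| := abs_sub_comm _ _
        _ ≤ ‖y - x‖ := abs_norm_sub_norm_le y x
    calc ‖‖x‖⁻¹ • (y - x) + (‖y‖⁻¹ - ‖x‖⁻¹) • y‖
        ≤ ‖‖x‖⁻¹ • (y - x)‖ + ‖(‖y‖⁻¹ - ‖x‖⁻¹) • y‖ := norm_add_le _ _
      _ ≤ ‖y - x‖ / ‖x‖ + ‖y - x‖ / ‖x‖ := by rw [h1]; gcongr
      _ = 2 * ‖y - x‖ / ‖x‖ := by ring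

/-- Perturbing a sequence by a bounded amount preserves `TendstoDirInfty`. -/
lemma TendstoDirInfty.perturb {n : ℕ} {x y : ℕ → Eu n} {u : Eu n}
    (hx : TendstoDirInfty x u) (hb : ∀ k, dist (y k) (x k) ≤ 1) :
    TendstoDirInfty y u := by
  obtain ⟨h1, h2⟩ := hx
  have hlow : ∀ k, ‖x k‖ - 1 ≤ ‖y k‖ := by
    intro k
    have := norm_sub_norm_le (x k) (y k)
    have hd : ‖x k - y k‖ ≤ 1 := by
      rw [← dist_eq_norm, dist_comm]; exact hb k
    linarith
  have hy1 : Tendsto (fun k => ‖y k‖) atTop atTop :=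
    tendsto_atTop_mono hlow (tendsto_atTop_add_const_right atTop (-1) h1)
  refine ⟨hy1, ?_⟩
  rw [tendsto_iff_dist_tendsto_zero]
  have hbd : ∀ᶠ k in atTop, dist (‖y k‖⁻¹ • y k) u ≤ 2 / ‖x k‖ + dist (‖x k‖⁻¹ • x k) u := by
    filter_upwards [h1.eventually_ge_atTop 1] with k hk
    have hxne : x k ≠ 0 := by
      intro h; rw [h, norm_zero] at hk; linarith
    have hd1 : dist (‖y k‖⁻¹ • y k) (‖x k‖⁻¹ • x k) ≤ 2 / ‖x k‖ := by
      refine (normalize_dist (x k) (y k) hxne).trans ?_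
      have : ‖y k - x k‖ ≤ 1 := by rw [← dist_eq_norm]; exact hb k
      have hxp : (0:ℝ) < ‖x k‖ := by linarith
      rw [div_le_div_iff₀ hxp hxp]
      nlinarith
    calc dist (‖y k‖⁻¹ • y k) u ≤ dist (‖y k‖⁻¹ • y k) (‖x k‖⁻¹ • x k)
            + dist (‖x k‖⁻¹ • x k) u := dist_triangle _ _ _
      _ ≤ 2 / ‖x k‖ + dist (‖x k‖⁻¹ • x k) u := by linarith
  have hrhs : Tendsto (fun k => 2 / ‖x k‖ + dist (‖x k‖⁻¹ • x k) u) atTop (𝓝 0) := by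
    have t1 : Tendsto (fun k => 2 / ‖x k‖) atTop (𝓝 0) := by
      simpa using (tendsto_const_nhds.div_atTop h1 : Tendsto (fun k => (2:ℝ) / ‖x k‖) atTop (𝓝 0))
    have t2 : Tendsto (fun k => dist (‖x k‖⁻¹ • x k) u) atTop (𝓝 0) :=
      tendsto_iff_dist_tendsto_zero.mp h2
    simpa using t1.add t2
  exact squeeze_zero' (Eventually.of_forall fun k => dist_nonneg) hbd hrhs

/-- Forward inclusion: a sequence of Fréchet normals along `x_k →ᵘ ∞` gives a point of `𝒩_u`. -/
lemma mem_NuSet_of_seq {n : ℕ} {f : Eu n → EReal} (hfbot : ∀ x, f x ≠ ⊥)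
    {u ξ : Eu n} {c : ℝ}
    (h : ∃ (x : ℕ → Eu n) (r : ℕ → ℝ) (w : ℕ → Eu n × ℝ),
      TendstoDirInfty x u ∧ (∀ k, f (x k) ≤ ((r k : ℝ) : EReal)) ∧
      (∀ k, w k ∈ frechetNCP (epigraph f) (x k, r k)) ∧
      Tendsto w atTop (𝓝 (ξ, c))) :
    (ξ, c) ∈ NuSet f u := by
  obtain ⟨x, r, w, hx, hr, hw, hlim⟩ := h
  refine ⟨x, w, hx, fun k => ?_, hlim⟩
  exact ⟨fun _ => (x k, (f (x k)).toReal), fun _ => w k,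
    fun _ => (frechet_toReal hfbot (hw k)).1, tendsto_const_nhds,
    fun _ => frechet_toReal hfbot (hw k), tendsto_const_nhds⟩

/-- Backward inclusion: from a point of `𝒩_u`, extract a diagonal sequence of
Fréchet normals along some `x'_k →ᵘ ∞`. -/
lemma seq_of_mem_NuSet {n : ℕ} {f : Eu n → EReal} {u ξ : Eu n} {c : ℝ}
    (h : (ξ, c) ∈ NuSet f u) :
    ∃ (x : ℕ → Eu n) (r : ℕ → ℝ) (w : ℕ → Eu n × ℝ),
      TendstoDirInfty x u ∧ (∀ k, f (x k) ≤ ((r k : ℝ) : EReal)) ∧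
      (∀ k, w k ∈ frechetNCP (epigraph f) (x k, r k)) ∧
      Tendsto w atTop (𝓝 (ξ, c)) := by
  obtain ⟨x, v, hx, hv, hvlim⟩ := h
  have H : ∀ k, ∃ q : (Eu n × ℝ) × (Eu n × ℝ),
      q.1 ∈ epigraph f ∧ dist q.1.1 (x k) ≤ 1 ∧
      q.2 ∈ frechetNCP (epigraph f) q.1 ∧ dist q.2 (v k) ≤ 1 / (k + 1) := by
    intro k
    obtain ⟨s, vv, hs, hslim, hvv, hvvlim⟩ := hv k
    have hfst : Tendsto (fun j => (s j).1) atTop (𝓝 (x k)) :=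
      (continuous_fst.tendsto _).comp hslim
    have E1 : ∀ᶠ j in atTop, dist (s j).1 (x k) ≤ 1 :=
      (Metric.tendsto_nhds.mp hfst 1 one_pos).mono fun _ h => h.le
    have E2 : ∀ᶠ j in atTop, dist (vv j) (v k) ≤ 1 / (k + 1) :=
      (Metric.tendsto_nhds.mp hvvlim (1 / (k + 1)) (by positivity)).mono fun _ h => h.le
    obtain ⟨j, h1, h2⟩ := (E1.and E2).exists
    exact ⟨(s j, vv j), hs j, h1, hvv j, h2⟩
  choose q hq1 hq2 hq3 hq4 using H
  refine ⟨fun k => (q k).1.1, fun k => (q k).1.2, fun k => (q k).2, ?_, ?_, ?_, ?_⟩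
  · exact hx.perturb hq2
  · exact fun k => hq1 k
  · intro k
    have : ((q k).1.1, (q k).1.2) = (q k).1 := rfl
    rw [this]; exact hq3 k
  · rw [tendsto_iff_dist_tendsto_zero]
    have hbd : ∀ k, dist ((q k).2) (ξ, c) ≤ 1 / (k + 1) + dist (v k) (ξ, c) := by
      intro k
      calc dist ((q k).2) (ξ, c) ≤ dist ((q k).2) (v k) + dist (v k) (ξ, c) :=
            dist_triangle _ _ _
        _ ≤ 1 / (k + 1) + dist (v k) (ξ, c) := by
            have := hq4 k; linarith
    have hrhs : Tendsto (fun k : ℕ => 1 / ((k:ℝ) + 1) + dist (v k) (ξ, c)) atTop (𝓝 0) := by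
      have t1 : Tendsto (fun k : ℕ => 1 / ((k:ℝ) + 1)) atTop (𝓝 0) :=
        tendsto_one_div_add_atTop_nhds_zero_nat
      have t2 : Tendsto (fun k => dist (v k) (ξ, c)) atTop (𝓝 0) :=
        tendsto_iff_dist_tendsto_zero.mp hvlim
      simpa using t1.add t2
    exact squeeze_zero (fun k => dist_nonneg) hbd hrhs

/-- `∂f(∞; u) = {ξ : (ξ, -1) ∈ 𝒩_u}` and
`∂^∞f(∞; u) = {ξ : (ξ, 0) ∈ 𝒩_u}`. -/
theorem dirSubdiffInfty_eq_NuSet {n : ℕ} (f : Eu n → EReal)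
    (hf : LowerSemicontinuous f) (hfbot : ∀ x, f x ≠ ⊥)
    (u : Eu n) (hu1 : ‖u‖ = 1) (hdom : u ∈ asymptoticConeEu {x | f x < ⊤}) :
    dirSubdiffInfty f u = {ξ | (ξ, (-1 : ℝ)) ∈ NuSet f u} ∧
    dirSingSubdiffInfty f u = {ξ | (ξ, (0 : ℝ)) ∈ NuSet f u} := by
  constructor
  · ext ξ
    constructor
    · intro h
      exact mem_NuSet_of_seq hfbot h
    · intro h
      exact seq_of_mem_NuSet h
  · ext ξ
    constructor
    · intro h
      exact mem_NuSet_of_seq hfbot h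
    · intro h
      exact seq_of_mem_NuSet h
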